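/- In an agent-only gridworld, the link of any vertex of the modified state complex satisfies Gromov's Link Condition (is flag) if and only if it contains no empty 2-simplices and no empty 3-simplices. -/

import Mathlib

/-- A cell of the gridworld. -/
abbrev Cell : Type := ℤ × ℤ

/-- Two cells are orthogonally adjacent if they differ by `(±1,0)` or `(0,±1)`,
i.e. their `L¹`-distance is 1. -/
def Adj (c c' : Cell) : Prop :=
  (c.1 - c'.1).natAbs + (c.2 - c'.2).natAbs = 1

instance (c c' : Cell) : Decidable (Adj c c') := by unfold Adj; infer_instance

/-- Membership of a cell in the `n₁ × n₂` board `{0,…,n₁-1} × {0,…,n₂-1}`. -/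
def InBoard (n₁ n₂ : ℤ) (c : Cell) : Prop :=
  0 ≤ c.1 ∧ c.1 < n₁ ∧ 0 ≤ c.2 ∧ c.2 < n₂

/-- A Move generator: an agent at `src` moves to the cell `tgt`. -/
structure Move where
  src : Cell
  tgt : Cell
deriving DecidableEq

/-- The support of a Move: its pair of cells. -/
def Move.sup (m : Move) : Finset Cell := {m.src, m.tgt}

/-- A Move is admissible at a state `S` (the finite set of agent positions) if
its source is occupied and its target is an unoccupied board cell orthogonally
adjacent to the source. -/
def Move.Adm (n₁ n₂ : ℤ) (S : Finset Cell) (m : Move) : Prop :=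
  m.src ∈ S ∧ m.tgt ∉ S ∧ Adj m.src m.tgt ∧ InBoard n₁ n₂ m.tgt

/-- The result of applying a Move. -/
def Move.apply (m : Move) (S : Finset Cell) : Finset Cell :=
  insert m.tgt (S.erase m.src)

/-- The `2 × 2` subgrid with bottom-left corner `a`. -/
def square (a : Cell) : Finset Cell :=
  {(a.1, a.2), (a.1 + 1, a.2), (a.1, a.2 + 1), (a.1 + 1, a.2 + 1)}

/-- A dance of the agent at `p` on the `2 × 2` subgrid with corner `a` is
admissible at `S` if `p` is an occupied cell of the subgrid, the subgrid lies
on the board, and its other three cells are unoccupied. -/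
def DanceAdm (n₁ n₂ : ℤ) (S : Finset Cell) (a p : Cell) : Prop :=
  p ∈ square a ∧ p ∈ S ∧ (∀ d ∈ square a, InBoard n₁ n₂ d) ∧
    ∀ d ∈ square a, d ≠ p → d ∉ S

/-- The two constituent Moves of the dance on `square a` which are admissible
at the current position `p` of the dancing agent. -/
def danceMoves (a p : Cell) : Finset Move :=
  ((square a).filter fun t => Adj p t).image (Move.mk p)

/-- A finite set `M` of Moves spans a simplex in the link of the state `S` in
the modified state complex iff all its Moves are admissible at `S` and `M`
partitions into blocks which are either single Moves or the pairs of admissible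
Moves of admissible dances, such that the supports of the blocks (the 2-cell
support of a single Move, the 4-cell subgrid of a dance) are pairwise
disjoint; i.e. `M` is the set of edges of a corner at `S` of a cube coming
from a commuting set of Moves and dances. -/
def SpansSimplex (n₁ n₂ : ℤ) (S : Finset Cell) (M : Finset Move) : Prop :=
  (∀ m ∈ M, m.Adm n₁ n₂ S) ∧
  ∃ (P : Finset (Finset Move)) (σ : Finset Move → Finset Cell),
    (∀ m ∈ M, ∃! B, B ∈ P ∧ m ∈ B) ∧
    (∀ B ∈ P, B ⊆ M ∧ B.Nonempty) ∧
    (∀ B ∈ P,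
      (∃ m : Move, B = {m} ∧ σ B = m.sup) ∨
      (∃ a p : Cell, DanceAdm n₁ n₂ S a p ∧ B = danceMoves a p ∧
        σ B = square a)) ∧
    (∀ B₁ ∈ P, ∀ B₂ ∈ P, B₁ ≠ B₂ → Disjoint (σ B₁) (σ B₂))

/-- The link of a state `S` in the modified state complex is a flag simplicial
complex: every finite set of admissible Moves which pairwise span 1-simplices
spans a simplex. -/
def LinkFlag (n₁ n₂ : ℤ) (S : Finset Cell) : Prop :=
  ∀ M : Finset Move, (∀ m ∈ M, m.Adm n₁ n₂ S) →
    (∀ m₁ ∈ M, ∀ m₂ ∈ M, m₁ ≠ m₂ → SpansSimplex n₁ n₂ S {m₁, m₂}) →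
    SpansSimplex n₁ n₂ S M

/-- Two agents' positions differ by a knight move. -/
def KnightRel (p q : Cell) : Prop :=
  ((p.1 - q.1).natAbs = 1 ∧ (p.2 - q.2).natAbs = 2) ∨
  ((p.1 - q.1).natAbs = 2 ∧ (p.2 - q.2).natAbs = 1)

/-- Two agents' positions differ by a 2-step bishop move. -/
def BishopRel (p q : Cell) : Prop :=
  (p.1 - q.1).natAbs = 2 ∧ (p.2 - q.2).natAbs = 2

lemma sup_mem_iff {c : Cell} {m : Move} : c ∈ m.sup ↔ c = m.src ∨ c = m.tgt := by
  simp [Move.sup]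

lemma danceMoves_src {a p : Cell} {m : Move} (h : m ∈ danceMoves a p) : m.src = p := by
  simp only [danceMoves, Finset.mem_image, Finset.mem_filter] at h
  obtain ⟨t, _, rfl⟩ := h; rfl

/-- Structure of danceMoves. -/
lemma danceMoves_struct {a p : Cell} (hp : p ∈ square a) :
    ∃ t₁ t₂ : Cell, t₁.2 = p.2 ∧ (t₁.1 - p.1).natAbs = 1 ∧ t₂.1 = p.1 ∧
      (t₂.2 - p.2).natAbs = 1 ∧ t₁ ∈ square a ∧ t₂ ∈ square a ∧
      danceMoves a p = {⟨p, t₁⟩, ⟨p, t₂⟩} := by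
  have hsq : ∀ q : Cell, q ∈ square a ↔
      (q = (a.1, a.2) ∨ q = (a.1+1, a.2) ∨ q = (a.1, a.2+1) ∨ q = (a.1+1, a.2+1)) := by
    intro q; simp [square]
  have key : ∀ t₁ t₂ : Cell, ((square a).filter fun t => Adj p t) = {t₁, t₂} →
      danceMoves a p = {⟨p, t₁⟩, ⟨p, t₂⟩} := by
    intro t₁ t₂ hf
    simp [danceMoves, hf]
  rw [hsq] at hp
  rcases hp with rfl | rfl | rfl | rfl
  · refine ⟨(a.1+1, a.2), (a.1, a.2+1), rfl, by simp, rfl, by simp, ?_, ?_, key _ _ ?_⟩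
    · rw [hsq]; tauto
    · rw [hsq]; tauto
    · ext t
      rw [Finset.mem_filter]; simp only [hsq, Finset.mem_insert, Finset.mem_singleton, Adj,
        Prod.ext_iff]
      constructor
      · rintro ⟨h1 | h1 | h1 | h1, h2⟩ <;> simp_all
      · rintro (⟨h1, h2⟩ | ⟨h1, h2⟩) <;> constructor <;> simp_all
  · refine ⟨(a.1, a.2), (a.1+1, a.2+1), rfl, by simp, rfl, by simp, ?_, ?_, key _ _ ?_⟩
    · rw [hsq]; tauto
    · rw [hsq]; tauto
    · ext t
      rw [Finset.mem_filter]; simp only [hsq, Finset.mem_insert, Finset.mem_singleton, Adj,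
        Prod.ext_iff]
      constructor
      · rintro ⟨h1 | h1 | h1 | h1, h2⟩ <;> simp_all <;> omega
      · rintro (⟨h1, h2⟩ | ⟨h1, h2⟩) <;> constructor <;> simp_all <;> omega
  · refine ⟨(a.1+1, a.2+1), (a.1, a.2), rfl, by simp, rfl, by simp, ?_, ?_, key _ _ ?_⟩
    · rw [hsq]; tauto
    · rw [hsq]; tauto
    · ext t
      rw [Finset.mem_filter]; simp only [hsq, Finset.mem_insert, Finset.mem_singleton, Adj,
        Prod.ext_iff]
      constructor
      · rintro ⟨h1 | h1 | h1 | h1, h2⟩ <;> simp_all <;> omega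
      · rintro (⟨h1, h2⟩ | ⟨h1, h2⟩) <;> constructor <;> simp_all <;> omega
  · refine ⟨(a.1, a.2+1), (a.1+1, a.2), rfl, by simp, rfl, by simp, ?_, ?_, key _ _ ?_⟩
    · rw [hsq]; tauto
    · rw [hsq]; tauto
    · ext t
      rw [Finset.mem_filter]; simp only [hsq, Finset.mem_insert, Finset.mem_singleton, Adj,
        Prod.ext_iff]
      constructor
      · rintro ⟨h1 | h1 | h1 | h1, h2⟩ <;> simp_all <;> omega
      · rintro (⟨h1, h2⟩ | ⟨h1, h2⟩) <;> constructor <;> simp_all <;> omega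
lemma mem_square_iff {a q : Cell} : q ∈ square a ↔
    (q = (a.1, a.2) ∨ q = (a.1+1, a.2) ∨ q = (a.1, a.2+1) ∨ q = (a.1+1, a.2+1)) := by
  simp [square]

lemma corner_x {a p t : Cell} (hp : p ∈ square a) (ht : t ∈ square a)
    (hy : t.2 = p.2) (hx : (t.1 - p.1).natAbs = 1) : p.1 + t.1 = 2*a.1 + 1 := by
  rw [mem_square_iff] at hp ht
  rcases hp with rfl | rfl | rfl | rfl <;> rcases ht with rfl | rfl | rfl | rfl <;>
    simp_all <;> omega

lemma corner_y {a p t : Cell} (hp : p ∈ square a) (ht : t ∈ square a)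
    (hy : t.1 = p.1) (hx : (t.2 - p.2).natAbs = 1) : p.2 + t.2 = 2*a.2 + 1 := by
  rw [mem_square_iff] at hp ht
  rcases hp with rfl | rfl | rfl | rfl <;> rcases ht with rfl | rfl | rfl | rfl <;>
    simp_all <;> omega

lemma square_corner_unique {a a' p : Cell} (hp : p ∈ square a) (hp' : p ∈ square a')
    (h : danceMoves a p = danceMoves a' p) : a = a' := by
  obtain ⟨t₁, t₂, ht1y, ht1x, ht2x, ht2y, ht1s, ht2s, hd⟩ := danceMoves_struct hp
  obtain ⟨u₁, u₂, hu1y, hu1x, hu2x, hu2y, hu1s, hu2s, hd'⟩ := danceMoves_struct hp'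
  rw [hd, hd'] at h
  have h1 : (⟨p, t₁⟩ : Move) ∈ ({⟨p, u₁⟩, ⟨p, u₂⟩} : Finset Move) := by
    rw [← h]; simp
  have h2 : (⟨p, t₂⟩ : Move) ∈ ({⟨p, u₁⟩, ⟨p, u₂⟩} : Finset Move) := by
    rw [← h]; simp
  simp only [Finset.mem_insert, Finset.mem_singleton, Move.mk.injEq, true_and] at h1 h2
  have e1 : t₁ = u₁ := by rcases h1 with h1 | h1; · exact h1
                          · exfalso; rw [h1] at ht1x; rw [hu2x] at ht1x; omega
  have e2 : t₂ = u₂ := by rcases h2 with h2 | h2; swap; · exact h2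
                          · exfalso; rw [h2] at ht2y; rw [hu1y] at ht2y; omega
  have c1 := corner_x hp ht1s ht1y ht1x
  have c1' := corner_x hp' hu1s hu1y hu1x
  have c2 := corner_y hp ht2s ht2x ht2y
  have c2' := corner_y hp' hu2s hu2x hu2y
  rw [e1] at c1; rw [e2] at c2
  exact Prod.ext (by omega) (by omega)

lemma danceMoves_card {a p : Cell} (hp : p ∈ square a) : (danceMoves a p).card = 2 := by
  obtain ⟨t₁, t₂, ht1y, ht1x, ht2x, ht2y, _, _, hd⟩ := danceMoves_struct hp
  rw [hd, Finset.card_insert_of_notMem, Finset.card_singleton]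
  simp only [Finset.mem_singleton, Move.mk.injEq, true_and]
  intro h; rw [h] at ht1x; omega
lemma src_mem_sup (m : Move) : m.src ∈ m.sup := by simp [Move.sup]

lemma pair_card {α : Type*} [DecidableEq α] {x y : α} (h : x ≠ y) :
    ({x, y} : Finset α).card = 2 := by
  rw [Finset.card_insert_of_notMem (by simpa using h), Finset.card_singleton]

lemma spans_pair_cases {n₁ n₂ : ℤ} {S : Finset Cell} {m₁ m₂ : Move} (hne : m₁ ≠ m₂)
    (h : SpansSimplex n₁ n₂ S {m₁, m₂}) :
    Disjoint m₁.sup m₂.sup ∨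
      (m₂.src = m₁.src ∧ ∃ a, DanceAdm n₁ n₂ S a m₁.src ∧
        ({m₁, m₂} : Finset Move) = danceMoves a m₁.src) := by
  obtain ⟨-, P, σ, hu, hsub, hcl, hdisj⟩ := h
  obtain ⟨B₁, ⟨hB₁P, hm₁⟩, hq₁⟩ := hu m₁ (by simp)
  obtain ⟨B₂, ⟨hB₂P, hm₂⟩, hq₂⟩ := hu m₂ (by simp)
  have hdance : ∀ B ∈ P, ∀ a p : Cell, DanceAdm n₁ n₂ S a p → B = danceMoves a p →
      (m₂.src = m₁.src ∧ ∃ a, DanceAdm n₁ n₂ S a m₁.src ∧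
        ({m₁, m₂} : Finset Move) = danceMoves a m₁.src) := by
    intro B hBP a p hda hBe
    have hBsub : B ⊆ {m₁, m₂} := (hsub B hBP).1
    have hBcard : B.card = 2 := by rw [hBe]; exact danceMoves_card hda.1
    have hBeq : B = {m₁, m₂} :=
      Finset.eq_of_subset_of_card_le hBsub (by rw [hBcard, pair_card hne])
    have h1 : m₁ ∈ danceMoves a p := by rw [← hBe, hBeq]; simp
    have h2 : m₂ ∈ danceMoves a p := by rw [← hBe, hBeq]; simp
    have e1 : m₁.src = p := danceMoves_src h1
    have e2 : m₂.src = p := danceMoves_src h2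
    refine ⟨by rw [e1, e2], a, by rwa [e1], by rw [e1, ← hBe, hBeq]⟩
  rcases hcl B₁ hB₁P with ⟨m, hBe, hσ⟩ | ⟨a, p, hda, hBe, hσ⟩
  · -- B₁ = {m}, so m = m₁
    have hm : m = m₁ := by rw [hBe] at hm₁; exact (Finset.mem_singleton.mp hm₁).symm
    subst hm
    rcases hcl B₂ hB₂P with ⟨m', hBe', hσ'⟩ | ⟨a, p, hda, hBe', hσ'⟩
    · have hm' : m' = m₂ := by rw [hBe'] at hm₂; exact (Finset.mem_singleton.mp hm₂).symm
      subst hm'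
      by_cases hBB : B₁ = B₂
      · exfalso; rw [hBB, hBe'] at hm₁; exact hne (by simpa using hm₁)
      · left; rw [← hσ, ← hσ']; exact hdisj B₁ hB₁P B₂ hB₂P hBB
    · exact Or.inr (hdance B₂ hB₂P a p hda hBe')
  · exact Or.inr (hdance B₁ hB₁P a p hda hBe)

lemma pair_dance_types {n₁ n₂ : ℤ} {S : Finset Cell} {m m' : Move} {a : Cell}
    (hda : DanceAdm n₁ n₂ S a m.src) (hne : m ≠ m')
    (he : ({m, m'} : Finset Move) = danceMoves a m.src) :
    (m.tgt.2 = m.src.2 ↔ ¬ (m'.tgt.2 = m.src.2)) := by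
  obtain ⟨t₁, t₂, ht1y, ht1x, ht2x, ht2y, _, _, hd⟩ := danceMoves_struct hda.1
  rw [hd] at he
  have h1 : m ∈ ({⟨m.src, t₁⟩, ⟨m.src, t₂⟩} : Finset Move) := by rw [← he]; simp
  have h2 : m' ∈ ({⟨m.src, t₁⟩, ⟨m.src, t₂⟩} : Finset Move) := by rw [← he]; simp
  simp only [Finset.mem_insert, Finset.mem_singleton] at h1 h2
  rcases h1 with h1 | h1 <;> rcases h2 with h2 | h2
  · exact absurd (h1.trans h2.symm) hne
  · have e1 : m.tgt = t₁ := congrArg Move.tgt h1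
    have e2 : m'.tgt = t₂ := congrArg Move.tgt h2
    rw [e1, e2]; omega
  · have e1 : m.tgt = t₂ := congrArg Move.tgt h1
    have e2 : m'.tgt = t₁ := congrArg Move.tgt h2
    rw [e1, e2]; omega
  · exact absurd (h1.trans h2.symm) hne
lemma not_disjoint_same_src {m₁ m₂ : Move} (h : m₂.src = m₁.src) :
    ¬ Disjoint m₁.sup m₂.sup := by
  intro hd
  exact (Finset.disjoint_left.mp hd (src_mem_sup m₁)) (h ▸ src_mem_sup m₂)

lemma not_three_same_src {n₁ n₂ : ℤ} {S : Finset Cell} {m₁ m₂ m₃ : Move}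
    (h12 : SpansSimplex n₁ n₂ S {m₁, m₂}) (h13 : SpansSimplex n₁ n₂ S {m₁, m₃})
    (h23 : SpansSimplex n₁ n₂ S {m₂, m₃})
    (hne12 : m₁ ≠ m₂) (hne13 : m₁ ≠ m₃) (hne23 : m₂ ≠ m₃)
    (hs2 : m₂.src = m₁.src) (hs3 : m₃.src = m₁.src) : False := by
  have c12 := (spans_pair_cases hne12 h12).resolve_left (not_disjoint_same_src hs2)
  have c13 := (spans_pair_cases hne13 h13).resolve_left (not_disjoint_same_src hs3)
  have c23 := (spans_pair_cases hne23 h23).resolve_left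
    (not_disjoint_same_src (by rw [hs2, hs3]))
  obtain ⟨-, a12, hda12, he12⟩ := c12
  obtain ⟨-, a13, hda13, he13⟩ := c13
  obtain ⟨-, a23, hda23, he23⟩ := c23
  have t12 := pair_dance_types hda12 hne12 he12
  have t13 := pair_dance_types hda13 hne13 he13
  have t23 := pair_dance_types hda23 hne23 he23
  rw [hs2] at t23
  tauto

open Classical in
noncomputable def sigmaFun (n₁ n₂ : ℤ) (S : Finset Cell) (B : Finset Move) : Finset Cell :=
  if h : ∃ a, ∃ p, DanceAdm n₁ n₂ S a p ∧ B = danceMoves a p then square h.choose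
  else if h2 : ∃ m, B = {m} then h2.choose.sup else ∅

lemma sigmaFun_singleton (n₁ n₂ : ℤ) (S : Finset Cell) (m : Move) :
    sigmaFun n₁ n₂ S {m} = m.sup := by
  have hno : ¬ ∃ a, ∃ p, DanceAdm n₁ n₂ S a p ∧ ({m} : Finset Move) = danceMoves a p := by
    rintro ⟨a, p, hda, he⟩
    have := danceMoves_card (a := a) (p := p) hda.1
    rw [← he] at this; simp at this
  rw [sigmaFun, dif_neg hno, dif_pos ⟨m, rfl⟩]
  congr 1
  exact Finset.singleton_injective (Exists.choose_spec (⟨m, rfl⟩ : ∃ m' : Move, ({m} : Finset Move) = {m'})).symm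

lemma sigmaFun_dance {n₁ n₂ : ℤ} {S : Finset Cell} {a p : Cell}
    (hda : DanceAdm n₁ n₂ S a p) :
    sigmaFun n₁ n₂ S (danceMoves a p) = square a := by
  have hex : ∃ a', ∃ p', DanceAdm n₁ n₂ S a' p' ∧ danceMoves a p = danceMoves a' p' :=
    ⟨a, p, hda, rfl⟩
  rw [sigmaFun, dif_pos hex]
  obtain ⟨p', hda', he'⟩ := hex.choose_spec
  -- p' = p
  obtain ⟨t₁, t₂, -, -, -, -, -, -, hd⟩ := danceMoves_struct hda.1
  have hmem : (⟨p, t₁⟩ : Move) ∈ danceMoves a p := by rw [hd]; simp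
  have hp' : p = p' := by
    have := danceMoves_src (he' ▸ hmem)
    simpa using this
  subst hp'
  congr 1
  exact (square_corner_unique hda.1 hda'.1 he').symm
section Blocks

variable {n₁ n₂ : ℤ} {S : Finset Cell} {M' : Finset Move}
  {P : Finset (Finset Move)} {σ : Finset Move → Finset Cell}

lemma block_singleton
    (hu : ∀ m ∈ M', ∃! B, B ∈ P ∧ m ∈ B)
    (hsub : ∀ B ∈ P, B ⊆ M' ∧ B.Nonempty)
    (hcl : ∀ B ∈ P, (∃ m : Move, B = {m} ∧ σ B = m.sup) ∨
      (∃ a p : Cell, DanceAdm n₁ n₂ S a p ∧ B = danceMoves a p ∧ σ B = square a))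
    {m : Move} (hm : m ∈ M') (huniq : ∀ m' ∈ M', m'.src = m.src → m' = m) :
    ({m} : Finset Move) ∈ P ∧ σ {m} = m.sup := by
  obtain ⟨B, ⟨hBP, hmB⟩, -⟩ := hu m hm
  rcases hcl B hBP with ⟨m', hBe, hσ⟩ | ⟨a, p, hda, hBe, hσ⟩
  · have : m' = m := by rw [hBe, Finset.mem_singleton] at hmB; exact hmB.symm
    subst this
    exact ⟨hBe ▸ hBP, hBe ▸ hσ⟩
  · exfalso
    obtain ⟨t₁, t₂, ht1y, ht1x, ht2x, ht2y, -, -, hd⟩ := danceMoves_struct hda.1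
    rw [hd] at hBe
    have hsubM : B ⊆ M' := (hsub B hBP).1
    have h1 : (⟨p, t₁⟩ : Move) ∈ B := by rw [hBe]; simp
    have h2 : (⟨p, t₂⟩ : Move) ∈ B := by rw [hBe]; simp
    have hmsrc : m.src = p := by
      rw [hBe, Finset.mem_insert, Finset.mem_singleton] at hmB
      rcases hmB with rfl | rfl <;> rfl
    have e1 : (⟨p, t₁⟩ : Move) = m := huniq _ (hsubM h1) (by rw [hmsrc])
    have e2 : (⟨p, t₂⟩ : Move) = m := huniq _ (hsubM h2) (by rw [hmsrc])
    have : t₁ = t₂ := congrArg Move.tgt (e1.trans e2.symm)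
    rw [this] at ht1y
    omega

lemma block_dance
    (hu : ∀ m ∈ M', ∃! B, B ∈ P ∧ m ∈ B)
    (hsub : ∀ B ∈ P, B ⊆ M' ∧ B.Nonempty)
    (hcl : ∀ B ∈ P, (∃ m : Move, B = {m} ∧ σ B = m.sup) ∨
      (∃ a p : Cell, DanceAdm n₁ n₂ S a p ∧ B = danceMoves a p ∧ σ B = square a))
    (hdisj : ∀ B₁ ∈ P, ∀ B₂ ∈ P, B₁ ≠ B₂ → Disjoint (σ B₁) (σ B₂))
    {a p : Cell} (hda : DanceAdm n₁ n₂ S a p) (hD : danceMoves a p ⊆ M')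
    (hsrc : ∀ m ∈ M', m.src = p → m ∈ danceMoves a p) :
    danceMoves a p ∈ P ∧ σ (danceMoves a p) = square a := by
  obtain ⟨t₁, t₂, ht1y, ht1x, ht2x, ht2y, -, -, hd⟩ := danceMoves_struct hda.1
  have hd1 : (⟨p, t₁⟩ : Move) ∈ danceMoves a p := by rw [hd]; simp
  have hd2 : (⟨p, t₂⟩ : Move) ∈ danceMoves a p := by rw [hd]; simp
  have hne : (⟨p, t₁⟩ : Move) ≠ (⟨p, t₂⟩ : Move) := by
    intro h
    have : t₁ = t₂ := congrArg Move.tgt h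
    rw [this] at ht1y; omega
  obtain ⟨B₁, ⟨hB₁P, hm₁⟩, -⟩ := hu _ (hD hd1)
  rcases hcl B₁ hB₁P with ⟨m', hBe, hσ⟩ | ⟨a', p', hda', hBe, hσ⟩
  · exfalso
    have hm'e : m' = (⟨p, t₁⟩ : Move) := by
      rw [hBe, Finset.mem_singleton] at hm₁; exact hm₁.symm
    subst hm'e
    obtain ⟨B₂, ⟨hB₂P, hm₂⟩, -⟩ := hu _ (hD hd2)
    have hBB : B₁ ≠ B₂ := by
      intro h
      rw [← h, hBe, Finset.mem_singleton] at hm₂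
      exact hne hm₂.symm
    have hdj := hdisj B₁ hB₁P B₂ hB₂P hBB
    have hp1 : p ∈ σ B₁ := by rw [hσ]; exact src_mem_sup _
    have hp2 : p ∈ σ B₂ := by
      rcases hcl B₂ hB₂P with ⟨m'', hBe', hσ'⟩ | ⟨a'', p'', hda'', hBe', hσ'⟩
      · have : m'' = (⟨p, t₂⟩ : Move) := by
          rw [hBe', Finset.mem_singleton] at hm₂; exact hm₂.symm
        subst this
        rw [hσ']; exact src_mem_sup _
      · have hp'' : p'' = p := by
          rw [hBe'] at hm₂; exact (danceMoves_src hm₂).symm ▸ rfl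
        rw [hσ']
        rw [← hp''] at *
        exact hda''.1
    exact Finset.disjoint_left.mp hdj hp1 hp2
  · -- B₁ is a dance block
    have hp' : p = p' := danceMoves_src (hBe ▸ hm₁)
    rw [← hp'] at hda' hBe
    -- every element of B₁ has src p, is in M', hence in danceMoves a p
    have hBsub : B₁ ⊆ danceMoves a p := by
      intro x hx
      refine hsrc x ((hsub B₁ hB₁P).1 hx) ?_
      rw [hBe] at hx
      exact danceMoves_src hx
    have hBeq : B₁ = danceMoves a p := by
      apply Finset.eq_of_subset_of_card_le hBsub
      rw [danceMoves_card hda.1, hBe, danceMoves_card hda'.1]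
    have haa : a' = a := square_corner_unique hda'.1 hda.1 (by rw [← hBe, hBeq])
    rw [← hBeq]
    exact ⟨hB₁P, by rw [hσ, haa]⟩

end Blocks
/-- in an agent-only gridworld, the link of any state `v` of the
modified state complex is flag (satisfies Gromov's Link Condition) if and only
if it has no empty 2-simplices and no empty 3-simplices: every 3 pairwise
adjacent admissible Moves span a 2-simplex, and every 4 pairwise adjacent
admissible Moves whose triples all span 2-simplices span a 3-simplex. -/
theorem linkFlag_iff_no_empty_two_three_simplices (n₁ n₂ : ℤ)
    (S : Finset Cell) (hS : ∀ c ∈ S, InBoard n₁ n₂ c) :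
    LinkFlag n₁ n₂ S ↔
      (∀ M : Finset Move, M.card = 3 → (∀ m ∈ M, m.Adm n₁ n₂ S) →
        (∀ m₁ ∈ M, ∀ m₂ ∈ M, m₁ ≠ m₂ → SpansSimplex n₁ n₂ S {m₁, m₂}) →
        SpansSimplex n₁ n₂ S M) ∧
      (∀ M : Finset Move, M.card = 4 → (∀ m ∈ M, m.Adm n₁ n₂ S) →
        (∀ m₁ ∈ M, ∀ m₂ ∈ M, m₁ ≠ m₂ → SpansSimplex n₁ n₂ S {m₁, m₂}) →
        (∀ T ⊆ M, T.card = 3 → SpansSimplex n₁ n₂ S T) →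
        SpansSimplex n₁ n₂ S M) := by
  constructor
  · intro hf
    exact ⟨fun M _ hadm hpair => hf M hadm hpair,
           fun M _ hadm hpair _ => hf M hadm hpair⟩
  rintro ⟨h3, h4⟩ M hadm hpair
  refine ⟨hadm, ?_⟩
  classical
  set blk : Move → Finset Move := fun m => M.filter (fun m' => m'.src = m.src) with hblkdef
  have hmem_blk : ∀ m m' : Move, m' ∈ blk m ↔ m' ∈ M ∧ m'.src = m.src := by
    intro m m'; simp [hblkdef]
  have hself : ∀ m ∈ M, m ∈ blk m := fun m hm => (hmem_blk m m).mpr ⟨hm, rfl⟩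
  have hblk_eq : ∀ m m' : Move, m'.src = m.src → blk m' = blk m := by
    intro m m' h; ext x; rw [hmem_blk, hmem_blk, h]
  have hblk_subM : ∀ m : Move, blk m ⊆ M := fun m => Finset.filter_subset _ _
  have hclass : ∀ m ∈ M, (blk m = {m} ∧ sigmaFun n₁ n₂ S (blk m) = m.sup) ∨
      ∃ a, DanceAdm n₁ n₂ S a m.src ∧ blk m = danceMoves a m.src ∧
        sigmaFun n₁ n₂ S (blk m) = square a := by
    intro m hmM
    have h1 : 1 ≤ (blk m).card := Finset.card_pos.mpr ⟨m, hself m hmM⟩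
    have h2 : (blk m).card ≤ 2 := by
      by_contra hgt
      push_neg at hgt
      obtain ⟨x, y, z, hx, hy, hz, hxy, hxz, hyz⟩ := Finset.two_lt_card_iff.mp hgt
      obtain ⟨hxM, hxs⟩ := (hmem_blk m x).mp hx
      obtain ⟨hyM, hys⟩ := (hmem_blk m y).mp hy
      obtain ⟨hzM, hzs⟩ := (hmem_blk m z).mp hz
      exact not_three_same_src (hpair x hxM y hyM hxy) (hpair x hxM z hzM hxz)
        (hpair y hyM z hzM hyz) hxy hxz hyz (by rw [hys, hxs]) (by rw [hzs, hxs])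
    rcases (by omega : (blk m).card = 1 ∨ (blk m).card = 2) with h | h
    · obtain ⟨m', he⟩ := Finset.card_eq_one.mp h
      have hm' : m = m' := by
        have := hself m hmM; rw [he, Finset.mem_singleton] at this; exact this
      subst hm'
      exact Or.inl ⟨he, by rw [he]; exact sigmaFun_singleton n₁ n₂ S m⟩
    · obtain ⟨x, y, hxy, he⟩ := Finset.card_eq_two.mp h
      have hxB : x ∈ blk m := by rw [he]; simp
      have hyB : y ∈ blk m := by rw [he]; simp
      obtain ⟨hxM, hxs⟩ := (hmem_blk m x).mp hxB
      obtain ⟨hyM, hys⟩ := (hmem_blk m y).mp hyB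
      have hsame : y.src = x.src := by rw [hys, hxs]
      rcases spans_pair_cases hxy (hpair x hxM y hyM hxy) with hd | ⟨-, a, hda, hdm⟩
      · exact absurd hd (not_disjoint_same_src hsame)
      · rw [hxs] at hda hdm
        exact Or.inr ⟨a, hda, he.trans hdm,
          by rw [he, hdm]; exact sigmaFun_dance hda⟩
  refine ⟨M.image blk, sigmaFun n₁ n₂ S, ?_, ?_, ?_, ?_⟩
  · -- unique block
    intro m hm
    refine ⟨blk m, ⟨Finset.mem_image_of_mem blk hm, hself m hm⟩, ?_⟩
    rintro B ⟨hBP, hmB⟩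
    obtain ⟨m'', _, rfl⟩ := Finset.mem_image.mp hBP
    exact hblk_eq m m'' ((hmem_blk m'' m).mp hmB).2.symm
  · -- subsets and nonempty
    intro B hBP
    obtain ⟨m'', hm'', rfl⟩ := Finset.mem_image.mp hBP
    exact ⟨hblk_subM m'', ⟨m'', hself m'' hm''⟩⟩
  · -- classification
    intro B hBP
    obtain ⟨m, hmM, rfl⟩ := Finset.mem_image.mp hBP
    rcases hclass m hmM with ⟨he, hσ⟩ | ⟨a, hda, he, hσ⟩
    · exact Or.inl ⟨m, he, hσ⟩
    · exact Or.inr ⟨a, m.src, hda, he, hσ⟩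
  · -- disjointness
    intro B₁ hB₁ B₂ hB₂ hne
    obtain ⟨m₁, hm₁M, rfl⟩ := Finset.mem_image.mp hB₁
    obtain ⟨m₂, hm₂M, rfl⟩ := Finset.mem_image.mp hB₂
    have hsrcne : m₁.src ≠ m₂.src := fun h => hne (hblk_eq m₂ m₁ h)
    have hne12 : m₁ ≠ m₂ := fun h => hsrcne (h ▸ rfl)
    -- key auxiliary: disjointness of a singleton support and a dance square
    have key_sd : ∀ m ∈ M, ∀ b : Cell, ∀ mq ∈ M, DanceAdm n₁ n₂ S b mq.src →
        blk mq = danceMoves b mq.src → m.src ≠ mq.src →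
        Disjoint m.sup (square b) := by
      intro m hmM b mq hmqM hdb he₂ hsne
      have hDM : danceMoves b mq.src ⊆ M := by rw [← he₂]; exact hblk_subM mq
      have hnotin : m ∉ danceMoves b mq.src := fun h => hsne (danceMoves_src h)
      have hTM : insert m (danceMoves b mq.src) ⊆ M :=
        Finset.insert_subset hmM hDM
      have hcard : (insert m (danceMoves b mq.src)).card = 3 := by
        rw [Finset.card_insert_of_notMem hnotin, danceMoves_card hdb.1]
      obtain ⟨-, P', σ', hu', hsub', hcl', hdisj'⟩ :=
        h3 _ hcard (fun x hx => hadm x (hTM hx))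
          (fun x hx y hy hxy => hpair x (hTM hx) y (hTM hy) hxy)
      obtain ⟨hDP, hσD⟩ := block_dance hu' hsub' hcl' hdisj' hdb
        (Finset.subset_insert _ _)
        (fun x hx hs => by
          rcases Finset.mem_insert.mp hx with rfl | h
          · exact absurd hs hsne
          · exact h)
      obtain ⟨hsP, hσs⟩ := block_singleton hu' hsub' hcl'
        (Finset.mem_insert_self _ _)
        (fun x hx hs => by
          rcases Finset.mem_insert.mp hx with rfl | h
          · rfl
          · exact absurd ((danceMoves_src h).symm.trans hs).symm hsne)
      have hneB : ({m} : Finset Move) ≠ danceMoves b mq.src := by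
        intro h
        have := danceMoves_card hdb.1
        rw [← h] at this; simp at this
      have := hdisj' _ hsP _ hDP hneB
      rwa [hσs, hσD] at this
    rcases hclass m₁ hm₁M with ⟨he₁, hσ₁⟩ | ⟨a, hda, he₁, hσ₁⟩ <;>
      rcases hclass m₂ hm₂M with ⟨he₂, hσ₂⟩ | ⟨b, hdb, he₂, hσ₂⟩
    · -- singleton / singleton
      rw [hσ₁, hσ₂]
      rcases spans_pair_cases hne12 (hpair m₁ hm₁M m₂ hm₂M hne12) with hd | ⟨hs, -⟩
      · exact hd
      · exact absurd hs.symm hsrcne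
    · -- singleton / dance
      rw [hσ₁, hσ₂]
      exact key_sd m₁ hm₁M b m₂ hm₂M hdb he₂ hsrcne
    · -- dance / singleton
      rw [hσ₁, hσ₂]
      exact (key_sd m₂ hm₂M a m₁ hm₁M hda he₁ (Ne.symm hsrcne)).symm
    · -- dance / dance
      rw [hσ₁, hσ₂]
      have hdisjT : Disjoint (danceMoves a m₁.src) (danceMoves b m₂.src) :=
        Finset.disjoint_left.mpr (fun x h1 h2 =>
          hsrcne ((danceMoves_src h1).symm.trans (danceMoves_src h2)))
      have hD1M : danceMoves a m₁.src ⊆ M := by rw [← he₁]; exact hblk_subM m₁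
      have hD2M : danceMoves b m₂.src ⊆ M := by rw [← he₂]; exact hblk_subM m₂
      have hTM : danceMoves a m₁.src ∪ danceMoves b m₂.src ⊆ M :=
        Finset.union_subset hD1M hD2M
      have hcard : (danceMoves a m₁.src ∪ danceMoves b m₂.src).card = 4 := by
        rw [Finset.card_union_of_disjoint hdisjT, danceMoves_card hda.1,
          danceMoves_card hdb.1]
      obtain ⟨-, P', σ', hu', hsub', hcl', hdisj'⟩ :=
        h4 _ hcard (fun x hx => hadm x (hTM hx))
          (fun x hx y hy hxy => hpair x (hTM hx) y (hTM hy) hxy)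
          (fun T' hT' hc3 => h3 T' hc3 (fun x hx => hadm x (hTM (hT' hx)))
            (fun x hx y hy hxy => hpair x (hTM (hT' hx)) y (hTM (hT' hy)) hxy))
      obtain ⟨hD1P, hσD1⟩ := block_dance hu' hsub' hcl' hdisj' hda
        Finset.subset_union_left
        (fun x hx hs => by
          rcases Finset.mem_union.mp hx with h | h
          · exact h
          · exact absurd ((danceMoves_src h).symm.trans hs).symm hsrcne)
      obtain ⟨hD2P, hσD2⟩ := block_dance hu' hsub' hcl' hdisj' hdb
        Finset.subset_union_right
        (fun x hx hs => by
          rcases Finset.mem_union.mp hx with h | h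
          · exact absurd ((danceMoves_src h).symm.trans hs) hsrcne
          · exact h)
      have hneD : danceMoves a m₁.src ≠ danceMoves b m₂.src := by
        intro h
        have hpos : 0 < (danceMoves a m₁.src).card := by
          rw [danceMoves_card hda.1]; norm_num
        obtain ⟨x, hx⟩ := Finset.card_pos.mp hpos
        exact hsrcne ((danceMoves_src hx).symm.trans (danceMoves_src (h ▸ hx)))
      have := hdisj' _ hD1P _ hD2P hneD
      rwa [hσD1, hσD2] at this
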